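/- The sequent ■(p∧q) ⊢ ■p ∧ ■q is not valid: there is a frame and a pointed model on it where ■(p∧q) is true but ■p ∧ ■q is not true. -/

import Mathlib

/-- Formulas of the language with ¬, ∧, ∨, □, ■, 𝐈 and ▲. -/
inductive Form : Type
  | var : ℕ → Form
  | neg : Form → Form
  | conj : Form → Form → Form
  | disj : Form → Form → Form
  | box : Form → Form
  | bbox : Form → Form
  | ign : Form → Form
  | tri : Form → Form

/-- A Kripke model for Belnap–Dunn modal logic. -/
structure Model (W : Type) where
  R : W → W → Prop
  vp : ℕ → W → Prop
  vn : ℕ → W → Prop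

mutual
  /-- support of truth -/
  def tr {W : Type} (M : Model W) : Form → W → Prop
    | .var n, w => M.vp n w
    | .neg φ, w => fa M φ w
    | .conj φ ψ, w => tr M φ w ∧ tr M ψ w
    | .disj φ ψ, w => tr M φ w ∨ tr M ψ w
    | .box φ, w => ∀ w', M.R w w' → tr M φ w'
    | .bbox φ, w => (∀ w', M.R w w' → tr M φ w') ∧
        ∀ w₁ w₂, M.R w w₁ → M.R w w₂ → fa M φ w₁ → fa M φ w₂
    | .ign φ, w => tr M φ w ∧ (∀ w', M.R w w' → w' ≠ w → fa M φ w') ∧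
        ∀ w₁ w₂, M.R w w₁ → w₁ ≠ w → M.R w w₂ → w₂ ≠ w → tr M φ w₁ → tr M φ w₂
    | .tri φ, w => (∀ w₁ w₂, M.R w w₁ → M.R w w₂ →
          (tr M φ w₁ → tr M φ w₂) ∧ (fa M φ w₁ → fa M φ w₂)) ∧
        ∀ w', M.R w w' → tr M φ w' ∨ fa M φ w'
  /-- support of falsity -/
  def fa {W : Type} (M : Model W) : Form → W → Prop
    | .var n, w => M.vn n w
    | .neg φ, w => tr M φ w
    | .conj φ ψ, w => fa M φ w ∨ fa M ψ w
    | .disj φ ψ, w => fa M φ w ∧ fa M ψ w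
    | .box φ, w => ∃ w', M.R w w' ∧ fa M φ w'
    | .bbox φ, w => (∃ w', M.R w w' ∧ fa M φ w') ∨
        ∃ w₁ w₂, M.R w w₁ ∧ M.R w w₂ ∧ tr M φ w₁ ∧ ¬ tr M φ w₂
    | .ign φ, w => fa M φ w ∨ (∃ w', M.R w w' ∧ w' ≠ w ∧ tr M φ w') ∨
        ∃ w₁ w₂, (M.R w w₁ ∧ w₁ ≠ w) ∧ (M.R w w₂ ∧ w₂ ≠ w) ∧ ¬ fa M φ w₁ ∧ fa M φ w₂
    | .tri φ, w => (∃ w₁ w₂, M.R w w₁ ∧ M.R w w₂ ∧ tr M φ w₁ ∧ ¬ tr M φ w₂) ∨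
        (∃ w₁ w₂, M.R w w₁ ∧ M.R w w₂ ∧ fa M φ w₁ ∧ ¬ fa M φ w₂) ∨
        (∃ w₁ w₂, M.R w w₁ ∧ M.R w w₂ ∧ tr M φ w₁ ∧ fa M φ w₂)
end

/-- φ contains an occurrence of □ -/
def hasBox : Form → Prop
  | .var _ => False
  | .neg φ => hasBox φ
  | .conj φ ψ => hasBox φ ∨ hasBox ψ
  | .disj φ ψ => hasBox φ ∨ hasBox ψ
  | .box _ => True
  | .bbox φ => hasBox φ
  | .ign φ => hasBox φ
  | .tri φ => hasBox φ

/-- φ contains an occurrence of ■ -/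
def hasBBox : Form → Prop
  | .var _ => False
  | .neg φ => hasBBox φ
  | .conj φ ψ => hasBBox φ ∨ hasBBox ψ
  | .disj φ ψ => hasBBox φ ∨ hasBBox ψ
  | .box φ => hasBBox φ
  | .bbox _ => True
  | .ign φ => hasBBox φ
  | .tri φ => hasBBox φ

/-- φ contains an occurrence of 𝐈 -/
def hasIgn : Form → Prop
  | .var _ => False
  | .neg φ => hasIgn φ
  | .conj φ ψ => hasIgn φ ∨ hasIgn ψ
  | .disj φ ψ => hasIgn φ ∨ hasIgn ψ
  | .box φ => hasIgn φ
  | .bbox φ => hasIgn φ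
  | .ign _ => True
  | .tri φ => hasIgn φ

/-- φ contains an occurrence of ▲ -/
def hasTri : Form → Prop
  | .var _ => False
  | .neg φ => hasTri φ
  | .conj φ ψ => hasTri φ ∨ hasTri ψ
  | .disj φ ψ => hasTri φ ∨ hasTri ψ
  | .box φ => hasTri φ
  | .bbox φ => hasTri φ
  | .ign φ => hasTri φ
  | .tri _ => True

/-- validity of the sequent φ ⊢ χ on the frame (W,R) -/
def validOn {W : Type} (R : W → W → Prop) (φ χ : Form) : Prop :=
  ∀ (vp vn : ℕ → W → Prop) (w : W), tr ⟨R, vp, vn⟩ φ w → tr ⟨R, vp, vn⟩ χ w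

/-- ♦φ := ¬■¬φ -/
def dia (φ : Form) : Form := .neg (.bbox (.neg φ))

theorem tr_bbox_of_forall_tr_and_fa {W : Type} {M : Model W} {φ : Form} {w : W}
    (h : ∀ w', M.R w w' → tr M φ w' ∧ fa M φ w') : tr M (.bbox φ) w :=
  ⟨fun w' hw' => (h w' hw').1, fun _ w₂ _ hw₂ _ => (h w₂ hw₂).2⟩

theorem not_tr_bbox_of_fa_of_not_fa {W : Type} {M : Model W} {φ : Form} {w w₁ w₂ : W}
    (hw₁ : M.R w w₁) (hw₂ : M.R w w₂) (h₁ : fa M φ w₁) (h₂ : ¬ fa M φ w₂) :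
    ¬ tr M (.bbox φ) w :=
  fun h => h₂ (h.2 w₁ w₂ hw₁ hw₂ h₁)

/-- Both successors of `0` make `p ∧ q` true and false (through `p` at `1`, through `q` at `2`),
but they disagree on the falsity of `p`. -/
def counterModel : Model (Fin 3) where
  R w w' := w = 0 ∧ w' ≠ 0
  vp _ w := w ≠ 0
  vn n w := (n = 0 ∧ w = 1) ∨ (n = 1 ∧ w = 2)

/-- ■(p∧q) ⊢ ■p ∧ ■q is not valid. -/
theorem bbox_not_conj_distributive :
    ∃ (W : Type) (_ : Nonempty W) (M : Model W) (w : W),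
      tr M (.bbox (.conj (.var 0) (.var 1))) w ∧
      ¬ tr M (.conj (.bbox (.var 0)) (.bbox (.var 1))) w := by
  refine ⟨Fin 3, ⟨0⟩, counterModel, 0, ?_, fun h => ?_⟩
  · refine tr_bbox_of_forall_tr_and_fa fun w hw => ?_
    fin_cases w <;> simp_all [counterModel, tr, fa]
  · refine not_tr_bbox_of_fa_of_not_fa (w₁ := 1) (w₂ := 2) ?_ ?_ ?_ ?_ h.1 <;>
      simp [counterModel, fa]
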